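/- arXiv:0903.3959 — 6 statements merged into one kernel-verified Lean document; each statement's English description precedes it below -/
import Mathlib

section
/- Let V and M be left H-modules and let ψ: V → H be a k-linear map that is H-linear when H carries the left adjoint action, i.e. ψ(h·v) = h₁ψ(v)S(h₂) for all h ∈ H, v ∈ V. Then the k-linear map ξ: V⊗M → M defined by ξ(v⊗m) = q¹ψ(v)S(q²)·m satisfies ξ(h₁·v ⊗ h₂·m) = h·ξ(v⊗m) for all h ∈ H, v ∈ V, m ∈ M; that is, ξ is a morphism of left H-modules, where H acts on V⊗M by h·(v⊗m) = h₁·v ⊗ h₂·m. -/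
/-!
Since `q¹ ⊗ S(q²) = X¹ ⊗ S(X²)αX³`, the element acting on `m` in `ξ(h₁·v ⊗ h₂·m)` is the
image of `φ · (Δ ⊗ id)(Δ h)` under `a ⊗ b ⊗ c ↦ a ψ(v) S(b) α c`, by the adjoint-linearity of
`ψ`. Quasi-coassociativity rewrites `φ · (Δ ⊗ id)(Δ h)` as `(id ⊗ Δ)(Δ h) · φ`, and the antipode
axiom `S(h₁) α h₂ = ε(h) α` collapses the image of the latter to `h q¹ ψ(v) S(q²)`.
-/

open scoped TensorProduct
open TensorProduct

structure QuasiHopf (k H : Type) [Field k] [Ring H] [Algebra k H] where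
  comul : H →ₐ[k] H ⊗[k] H
  counit : H →ₐ[k] k
  counit_left : ∀ h : H,
    (TensorProduct.lid k H) ((TensorProduct.map counit.toLinearMap (LinearMap.id : H →ₗ[k] H)) (comul h)) = h
  counit_right : ∀ h : H,
    (TensorProduct.rid k H) ((TensorProduct.map (LinearMap.id : H →ₗ[k] H) counit.toLinearMap) (comul h)) = h
  phi : H ⊗[k] (H ⊗[k] H)
  phiInv : H ⊗[k] (H ⊗[k] H)
  phi_inv : phi * phiInv = 1
  inv_phi : phiInv * phi = 1
  quasi_coassoc : ∀ h : H,
    (TensorProduct.map (LinearMap.id : H →ₗ[k] H) comul.toLinearMap) (comul h)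
      = phi * ((TensorProduct.assoc k H H H)
          ((TensorProduct.map comul.toLinearMap (LinearMap.id : H →ₗ[k] H)) (comul h))) * phiInv
  pentagon :
    ((1 : H) ⊗ₜ[k] phi)
      * ((TensorProduct.map (LinearMap.id : H →ₗ[k] H)
            ((TensorProduct.assoc k H H H).toLinearMap ∘ₗ
              TensorProduct.map comul.toLinearMap (LinearMap.id : H →ₗ[k] H))) phi)
      * ((TensorProduct.map (LinearMap.id : H →ₗ[k] H) (TensorProduct.assoc k H H H).toLinearMap)
            ((TensorProduct.assoc k H (H ⊗[k] H) H) (phi ⊗ₜ[k] (1 : H))))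
    = ((TensorProduct.map (LinearMap.id : H →ₗ[k] H)
          (TensorProduct.map (LinearMap.id : H →ₗ[k] H) comul.toLinearMap)) phi)
      * ((TensorProduct.assoc k H H (H ⊗[k] H))
          ((TensorProduct.map comul.toLinearMap (LinearMap.id : H ⊗[k] H →ₗ[k] H ⊗[k] H)) phi))
  counit_phi :
    (TensorProduct.map (LinearMap.id : H →ₗ[k] H)
        ((TensorProduct.lid k H).toLinearMap ∘ₗ
          TensorProduct.map counit.toLinearMap (LinearMap.id : H →ₗ[k] H))) phi = 1
  S : H →ₗ[k] H
  Sinv : H →ₗ[k] H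
  S_mul : ∀ a b : H, S (a * b) = S b * S a
  S_one : S 1 = 1
  S_Sinv : ∀ h : H, S (Sinv h) = h
  Sinv_S : ∀ h : H, Sinv (S h) = h
  alpha : H
  beta : H
  antipode_left : ∀ (h : H) (n : ℕ) (h1 h2 : Fin n → H),
    comul h = ∑ i, h1 i ⊗ₜ[k] h2 i → ∑ i, S (h1 i) * alpha * h2 i = counit h • alpha
  antipode_right : ∀ (h : H) (n : ℕ) (h1 h2 : Fin n → H),
    comul h = ∑ i, h1 i ⊗ₜ[k] h2 i → ∑ i, h1 i * beta * S (h2 i) = counit h • beta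
  antipode_phi : ∀ (n : ℕ) (X1 X2 X3 : Fin n → H),
    phi = ∑ i, X1 i ⊗ₜ[k] (X2 i ⊗ₜ[k] X3 i) →
      ∑ i, X1 i * beta * S (X2 i) * alpha * X3 i = 1
  antipode_phiInv : ∀ (n : ℕ) (x1 x2 x3 : Fin n → H),
    phiInv = ∑ i, x1 i ⊗ₜ[k] (x2 i ⊗ₜ[k] x3 i) →
      ∑ i, S (x1 i) * alpha * x2 i * beta * S (x3 i) = 1

namespace QuasiHopf

variable {k H : Type} [Field k] [Ring H] [Algebra k H] (Q : QuasiHopf k H)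

noncomputable def sAlpha : H ⊗[k] H →ₗ[k] H :=
  LinearMap.mul' k H ∘ₗ map (LinearMap.mulRight k Q.alpha ∘ₗ Q.S) LinearMap.id

@[simp]
lemma sAlpha_tmul (a b : H) : Q.sAlpha (a ⊗ₜ b) = Q.S a * Q.alpha * b := by
  simp [sAlpha]

lemma sAlpha_mul_tmul (u : H ⊗[k] H) (b c : H) :
    Q.sAlpha (u * b ⊗ₜ c) = Q.S b * Q.sAlpha u * c := by
  induction u with
  | zero => simp
  | add u u' hu hu' => simp only [add_mul, map_add, hu, hu', mul_add]
  | tmul a a' => simp [Q.S_mul, mul_assoc]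

lemma sAlpha_comul (g : H) : Q.sAlpha (Q.comul g) = Q.counit g • Q.alpha := by
  obtain ⟨n, g₁, g₂, hg⟩ := exists_sum_tmul_eq (Q.comul g)
  rw [← Q.antipode_left g n g₁ g₂ hg, hg, map_sum]
  simp

lemma sAlpha_comul_mul (g : H) (t : H ⊗[k] H) :
    Q.sAlpha (Q.comul g * t) = Q.counit g • Q.sAlpha t := by
  induction t with
  | zero => simp
  | add t t' ht ht' => rw [mul_add, map_add, ht, ht', map_add, smul_add]
  | tmul b c => rw [sAlpha_mul_tmul, sAlpha_comul, sAlpha_tmul, mul_smul_comm, smul_mul_assoc]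

noncomputable def ad (x : H) : H ⊗[k] H →ₗ[k] H :=
  LinearMap.mul' k H ∘ₗ map (LinearMap.mulRight k x) Q.S

@[simp]
lemma ad_tmul (x a b : H) : Q.ad x (a ⊗ₜ b) = a * x * Q.S b := by
  simp [ad]

lemma apply_smul_eq_ad_comul {V : Type*} [AddCommMonoid V] [Module k V] [SMul H V]
    (ψ : V →ₗ[k] H)
    (hψ : ∀ (h : H) (v : V) (n : ℕ) (h1 h2 : Fin n → H),
      Q.comul h = ∑ j, h1 j ⊗ₜ[k] h2 j → ψ (h • v) = ∑ j, h1 j * ψ v * Q.S (h2 j))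
    (g : H) (v : V) : ψ (g • v) = Q.ad (ψ v) (Q.comul g) := by
  obtain ⟨n, g₁, g₂, hg⟩ := exists_sum_tmul_eq (Q.comul g)
  rw [hψ g v n g₁ g₂ hg, hg, map_sum]
  simp

/-- `a ⊗ b ⊗ c ↦ a x S(b) α c`; on `φ` it is `q¹ x S(q²)`. -/
noncomputable def sandwich (x : H) : H ⊗[k] (H ⊗[k] H) →ₗ[k] H :=
  LinearMap.mul' k H ∘ₗ map (LinearMap.mulRight k x) Q.sAlpha

@[simp]
lemma sandwich_tmul (x a : H) (t : H ⊗[k] H) :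
    Q.sandwich x (a ⊗ₜ t) = a * x * Q.sAlpha t := by
  simp [sandwich]

@[simp]
lemma sandwich_zero_left (t : H ⊗[k] (H ⊗[k] H)) : Q.sandwich 0 t = 0 := by
  induction t with
  | zero => simp
  | add t t' ht ht' => rw [map_add, ht, ht', add_zero]
  | tmul a s => simp

lemma sandwich_add_left (x y : H) (t : H ⊗[k] (H ⊗[k] H)) :
    Q.sandwich (x + y) t = Q.sandwich x t + Q.sandwich y t := by
  induction t with
  | zero => simp
  | add t t' ht ht' => simp only [map_add, ht, ht']; abel
  | tmul a s => simp [mul_add, add_mul]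

lemma sandwich_mul_assoc_tmul (x : H) (t : H ⊗[k] (H ⊗[k] H)) (u : H ⊗[k] H) (d : H) :
    Q.sandwich x (t * TensorProduct.assoc k H H H (u ⊗ₜ d)) = Q.sandwich (Q.ad x u) t * d := by
  induction u with
  | zero => simp
  | add u u' hu hu' => simp only [add_tmul, map_add, mul_add, hu, hu', sandwich_add_left, add_mul]
  | tmul g₁ g₂ =>
    induction t with
    | zero => simp
    | add t t' ht ht' => simp only [add_mul, map_add, ht, ht']
    | tmul a s =>
      induction s with
      | zero => simp
      | add s s' hs hs' => simp only [tmul_add, add_mul, map_add, hs, hs']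
      | tmul b c => simp [Q.S_mul, mul_assoc]

lemma sandwich_map_comul_comul_mul (x h : H) (t : H ⊗[k] (H ⊗[k] H)) :
    Q.sandwich x (map LinearMap.id Q.comul.toLinearMap (Q.comul h) * t) = h * Q.sandwich x t := by
  suffices ∀ u : H ⊗[k] H, Q.sandwich x (map LinearMap.id Q.comul.toLinearMap u * t)
      = TensorProduct.rid k H (map LinearMap.id Q.counit.toLinearMap u) * Q.sandwich x t by
    rw [this, Q.counit_right]
  intro u
  induction u with
  | zero => simp
  | add u u' hu hu' => simp only [map_add, add_mul, hu, hu']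
  | tmul a b =>
    induction t with
    | zero => simp
    | add t t' ht ht' => simp only [mul_add, map_add, ht, ht']
    | tmul c s => simp [sAlpha_comul_mul, mul_assoc]

lemma sandwich_phi_mul_comul (x h : H) :
    Q.sandwich x
        (Q.phi * TensorProduct.assoc k H H H (map Q.comul.toLinearMap LinearMap.id (Q.comul h)))
      = h * Q.sandwich x Q.phi := by
  rw [← Q.sandwich_map_comul_comul_mul x h, ← mul_one (Q.phi * _), ← Q.inv_phi, ← mul_assoc,
    ← Q.quasi_coassoc]

end QuasiHopf

theorem stmt0_general {k H : Type} [Field k] [Ring H] [Algebra k H] (Q : QuasiHopf k H)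
    (V M : Type) [AddCommGroup V] [Module k V] [Module H V]
    [AddCommGroup M] [Module k M] [Module H M]
    (ψ : V →ₗ[k] H)
    (hψ : ∀ (h : H) (v : V) (n : ℕ) (h1 h2 : Fin n → H),
      Q.comul h = ∑ j, h1 j ⊗ₜ[k] h2 j →
      ψ (h • v) = ∑ j, h1 j * ψ v * Q.S (h2 j))
    (h : H) (v : V) (m : M)
    (nX : ℕ) (X1 X2 X3 : Fin nX → H)
    (hX : Q.phi = ∑ i, X1 i ⊗ₜ[k] (X2 i ⊗ₜ[k] X3 i))
    (n : ℕ) (h1 h2 : Fin n → H)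
    (hh : Q.comul h = ∑ j, h1 j ⊗ₜ[k] h2 j) :
    ∑ j, ∑ i, (X1 i * ψ (h1 j • v) * Q.S (Q.Sinv (Q.alpha * X3 i) * X2 i)) • (h2 j • m)
      = h • ∑ i, (X1 i * ψ v * Q.S (Q.Sinv (Q.alpha * X3 i) * X2 i)) • m := by
  have hq : ∀ i, Q.S (Q.Sinv (Q.alpha * X3 i) * X2 i) = Q.sAlpha (X2 i ⊗ₜ X3 i) := by
    simp [Q.S_mul, Q.S_Sinv, mul_assoc]
  have key : ∑ j, ∑ i, X1 i * ψ (h1 j • v) * Q.sAlpha (X2 i ⊗ₜ X3 i) * h2 j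
      = h * ∑ i, X1 i * ψ v * Q.sAlpha (X2 i ⊗ₜ X3 i) := by
    calc _ = ∑ j, ∑ i, Q.sandwich (ψ v) ((X1 i ⊗ₜ (X2 i ⊗ₜ X3 i))
              * TensorProduct.assoc k H H H (Q.comul (h1 j) ⊗ₜ h2 j)) := by
          simp [Q.apply_smul_eq_ad_comul ψ hψ, Q.sandwich_mul_assoc_tmul]
      _ = Q.sandwich (ψ v)
            (Q.phi * TensorProduct.assoc k H H H
              (map Q.comul.toLinearMap LinearMap.id (Q.comul h))) := by
          simp [hX, hh, map_sum, Finset.mul_sum, Finset.sum_mul]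
      _ = _ := by
          rw [Q.sandwich_phi_mul_comul, hX]
          simp [Finset.mul_sum]
  simp only [hq, smul_smul, ← Finset.sum_smul]
  rw [key]

/-- the map `ξ(v ⊗ m) = q¹ψ(v)S(q²)·m` is a morphism of left `H`-modules,
where `q = q¹ ⊗ q² = X¹ ⊗ S⁻¹(αX³)X²` and `ψ : V → H` is `H`-linear for the left adjoint
action on `H`.  Sweedler sums and the legs of `φ` are represented by arbitrary finite
families representing the corresponding tensors. -/
theorem stmt0 {k H : Type} [Field k] [Ring H] [Algebra k H] (Q : QuasiHopf k H)
    (V M : Type) [AddCommGroup V] [Module k V] [Module H V]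
    [IsScalarTower k H V] [SMulCommClass k H V]
    [AddCommGroup M] [Module k M] [Module H M]
    [IsScalarTower k H M] [SMulCommClass k H M]
    (ψ : V →ₗ[k] H)
    (hψ : ∀ (h : H) (v : V) (n : ℕ) (h1 h2 : Fin n → H),
      Q.comul h = ∑ j, h1 j ⊗ₜ[k] h2 j →
      ψ (h • v) = ∑ j, h1 j * ψ v * Q.S (h2 j))
    (h : H) (v : V) (m : M)
    (nX : ℕ) (X1 X2 X3 : Fin nX → H)
    (hX : Q.phi = ∑ i, X1 i ⊗ₜ[k] (X2 i ⊗ₜ[k] X3 i))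
    (n : ℕ) (h1 h2 : Fin n → H)
    (hh : Q.comul h = ∑ j, h1 j ⊗ₜ[k] h2 j) :
    ∑ j, ∑ i, (X1 i * ψ (h1 j • v) * Q.S (Q.Sinv (Q.alpha * X3 i) * X2 i)) • (h2 j • m)
      = h • ∑ i, (X1 i * ψ v * Q.S (Q.Sinv (Q.alpha * X3 i) * X2 i)) • m :=
  stmt0_general Q V M ψ hψ h v m nX X1 X2 X3 hX n h1 h2 hh
end

section
/- Let B be a left H-module equipped with a k-bilinear product · and an element 1_B such that, writing ▷ for the H-action on B, for all h ∈ H and b, c, d ∈ B: h▷(b·c) = (h₁▷b)·(h₂▷c); h▷1_B = ε(h)1_B; (b·c)·d = (X¹▷b)·((X²▷c)·(X³▷d)); and 1_B·b = b = b·1_B. Then the k-bilinear product on B⊗H defined by (b⊗h)(c⊗g) = (x¹▷b)·(x²h₁▷c) ⊗ x³h₂g is associative with two-sided unit 1_B⊗1; that is, the bosonisation B⋊·H is a unital associative k-algebra. -/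
open scoped TensorProduct
open TensorProduct

/-!
Both sides of the associativity law, evaluated on `b ⊗ h`, `c ⊗ g`, `d ⊗ f`, have the form
`∑ (p ▷ b)((q ▷ c)(r ▷ d)) ⊗ w` for an element `p ⊗ q ⊗ r ⊗ w` of `H^{⊗4}`; on the left this
uses the quasi-associativity of `B` once, to rebracket a product `(b' c') d'`. So associativity
reduces to an identity in `H^{⊗4}`, which follows from quasi-coassociativity and the pentagon
axiom in the form `φ₁₂₃ (Δ ⊗ id ⊗ id)(φ⁻¹) (id ⊗ id ⊗ Δ)(φ⁻¹) φ₂₃₄ = (id ⊗ Δ ⊗ id)(φ⁻¹)`.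
The unit laws reduce to `(ε ⊗ id ⊗ id)(φ⁻¹) = 1 = (id ⊗ ε ⊗ id)(φ⁻¹)`; the first of these is
obtained by applying `ε ⊗ ε ⊗ id ⊗ id` to the pentagon axiom.
-/

open Algebra.TensorProduct (includeRight)

namespace TensorProduct

theorem exists_sum_tmul_tmul_eq {R M N P : Type*} [CommSemiring R] [AddCommMonoid M]
    [AddCommMonoid N] [AddCommMonoid P] [Module R M] [Module R N] [Module R P]
    (x : M ⊗[R] (N ⊗[R] P)) :
    ∃ (n : ℕ) (f : Fin n → M) (g : Fin n → N) (h : Fin n → P),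
      x = ∑ i, f i ⊗ₜ[R] (g i ⊗ₜ[R] h i) := by
  induction x with
  | zero => exact ⟨0, ![], ![], ![], by simp⟩
  | tmul m s =>
    obtain ⟨n, g, h, rfl⟩ := exists_sum_tmul_eq s
    exact ⟨n, fun _ => m, g, h, tmul_sum _ _ _⟩
  | add x y hx hy =>
    obtain ⟨n, f, g, h, rfl⟩ := hx
    obtain ⟨m, f', g', h', rfl⟩ := hy
    refine ⟨n + m, Fin.addCases f f', Fin.addCases g g', Fin.addCases h h', ?_⟩
    simp [Fin.sum_univ_add]

theorem bilinear_assoc_of_tmul {R M N : Type*} [CommSemiring R] [AddCommMonoid M]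
    [AddCommMonoid N] [Module R M] [Module R N]
    (μ : M ⊗[R] N →ₗ[R] M ⊗[R] N →ₗ[R] M ⊗[R] N)
    (h : ∀ (m₁ m₂ m₃ : M) (n₁ n₂ n₃ : N),
      μ (μ (m₁ ⊗ₜ n₁) (m₂ ⊗ₜ n₂)) (m₃ ⊗ₜ n₃) = μ (m₁ ⊗ₜ n₁) (μ (m₂ ⊗ₜ n₂) (m₃ ⊗ₜ n₃)))
    (x y z : M ⊗[R] N) : μ (μ x y) z = μ x (μ y z) := by
  induction x using TensorProduct.induction_on with
  | zero => simp
  | add x x' hx hx' => simp only [map_add, LinearMap.add_apply, hx, hx']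
  | tmul m₁ n₁ =>
    induction y using TensorProduct.induction_on with
    | zero => simp
    | add y y' hy hy' => simp only [map_add, LinearMap.add_apply, hy, hy']
    | tmul m₂ n₂ =>
      induction z using TensorProduct.induction_on with
      | zero => simp
      | add z z' hz hz' => simp only [map_add, hz, hz']
      | tmul m₃ n₃ => exact h m₁ m₂ m₃ n₁ n₂ n₃

end TensorProduct

section TensorPowers

variable {k H : Type*} [CommSemiring k] [Semiring H] [Algebra k H]

/- Without this shortcut, instance search for `Semiring (H ⊗[k] (H ⊗[k] (H ⊗[k] H)))` (needed for
`mul_add`, `mul_zero`, ...) fails on the inner factor. -/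
instance : Semiring (H ⊗[k] (H ⊗[k] H)) := Algebra.TensorProduct.instSemiring

def comulFst (cm : H →ₐ[k] H ⊗[k] H) : H ⊗[k] H →ₐ[k] H ⊗[k] (H ⊗[k] H) :=
  (Algebra.TensorProduct.assoc k k k H H H).toAlgHom.comp
    (Algebra.TensorProduct.map cm (AlgHom.id k H))

def comulSnd (cm : H →ₐ[k] H ⊗[k] H) : H ⊗[k] H →ₐ[k] H ⊗[k] (H ⊗[k] H) :=
  Algebra.TensorProduct.map (AlgHom.id k H) cm

def comulLeg₁ (cm : H →ₐ[k] H ⊗[k] H) :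
    H ⊗[k] (H ⊗[k] H) →ₐ[k] H ⊗[k] (H ⊗[k] (H ⊗[k] H)) :=
  (Algebra.TensorProduct.assoc k k k H H (H ⊗[k] H)).toAlgHom.comp
    (Algebra.TensorProduct.map cm (AlgHom.id k (H ⊗[k] H)))

def comulLeg₂ (cm : H →ₐ[k] H ⊗[k] H) :
    H ⊗[k] (H ⊗[k] H) →ₐ[k] H ⊗[k] (H ⊗[k] (H ⊗[k] H)) :=
  Algebra.TensorProduct.map (AlgHom.id k H) (comulFst cm)

def comulLeg₃ (cm : H →ₐ[k] H ⊗[k] H) :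
    H ⊗[k] (H ⊗[k] H) →ₐ[k] H ⊗[k] (H ⊗[k] (H ⊗[k] H)) :=
  Algebra.TensorProduct.map (AlgHom.id k H) (comulSnd cm)

/- `x ↦ x ⊗ 1`, written through the same reassociations as in the `pentagon` field, so that
`QuasiHopf.pentagon_algHom` holds by `rfl`. -/
variable (k H) in
def tmulOneRight : H ⊗[k] (H ⊗[k] H) →ₐ[k] H ⊗[k] (H ⊗[k] (H ⊗[k] H)) :=
  (Algebra.TensorProduct.map (AlgHom.id k H)
      (Algebra.TensorProduct.assoc k k k H H H).toAlgHom).comp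
    ((Algebra.TensorProduct.assoc k k k H (H ⊗[k] H) H).toAlgHom.comp
      Algebra.TensorProduct.includeLeft)

def counitFst (ct : H →ₐ[k] k) (A : Type*) [Semiring A] [Algebra k A] : H ⊗[k] A →ₐ[k] A :=
  (Algebra.TensorProduct.lid k A).toAlgHom.comp (Algebra.TensorProduct.map ct (AlgHom.id k A))

def counitSnd (ct : H →ₐ[k] k) : H ⊗[k] (H ⊗[k] H) →ₐ[k] H ⊗[k] H :=
  Algebra.TensorProduct.map (AlgHom.id k H) (counitFst ct H)

/- For `ψ = x¹ ⊗ x² ⊗ x³` this is `x¹ ⊗ x² h₁ ⊗ x³ h₂ g`, the coefficient of the bosonisation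
product `(b ⊗ h)(c ⊗ g)`. -/
def bosonCoeff (cm : H →ₐ[k] H ⊗[k] H) (ψ : H ⊗[k] (H ⊗[k] H)) (h g : H) :
    H ⊗[k] (H ⊗[k] H) :=
  ψ * (1 ⊗ₜ cm h) * (1 ⊗ₜ (1 ⊗ₜ g))

variable (cm : H →ₐ[k] H ⊗[k] H) (ct : H →ₐ[k] k) (a b c : H)

@[simp] lemma comulFst_tmul :
    comulFst cm (a ⊗ₜ b) = TensorProduct.assoc k H H H (cm a ⊗ₜ b) := rfl

@[simp] lemma comulSnd_tmul : comulSnd cm (a ⊗ₜ b) = a ⊗ₜ cm b := rfl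

@[simp] lemma comulLeg₁_tmul (s : H ⊗[k] H) :
    comulLeg₁ cm (a ⊗ₜ s) = TensorProduct.assoc k H H (H ⊗[k] H) (cm a ⊗ₜ s) := rfl

@[simp] lemma comulLeg₂_tmul (s : H ⊗[k] H) : comulLeg₂ cm (a ⊗ₜ s) = a ⊗ₜ comulFst cm s := rfl

@[simp] lemma comulLeg₃_tmul (s : H ⊗[k] H) : comulLeg₃ cm (a ⊗ₜ s) = a ⊗ₜ comulSnd cm s := rfl

@[simp] lemma tmulOneRight_tmul :
    tmulOneRight k H (a ⊗ₜ (b ⊗ₜ c)) = a ⊗ₜ (b ⊗ₜ (c ⊗ₜ 1)) := by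
  simp [tmulOneRight]

@[simp] lemma counitFst_tmul {A : Type*} [Semiring A] [Algebra k A] (x : A) :
    counitFst ct A (a ⊗ₜ x) = ct a • x := rfl

@[simp] lemma counitSnd_tmul (s : H ⊗[k] H) :
    counitSnd ct (a ⊗ₜ s) = a ⊗ₜ counitFst ct H s := rfl

@[simp] lemma comulFst_one_tmul : comulFst cm (1 ⊗ₜ a) = 1 ⊗ₜ (1 ⊗ₜ a) := by
  simp [Algebra.TensorProduct.one_def]

@[simp] lemma comulLeg₁_one_tmul (s : H ⊗[k] H) : comulLeg₁ cm (1 ⊗ₜ s) = 1 ⊗ₜ (1 ⊗ₜ s) := by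
  simp [Algebra.TensorProduct.one_def]

end TensorPowers

section Counit

variable {k H : Type*} [CommSemiring k] [Semiring H] [Algebra k H] (cm : H →ₐ[k] H ⊗[k] H)
  (ct : H →ₐ[k] k)

lemma counitFst_assoc {A C : Type*} [Semiring A] [Algebra k A] [Semiring C] [Algebra k C]
    (s : H ⊗[k] A) (c : C) :
    counitFst ct (A ⊗[k] C) (TensorProduct.assoc k H A C (s ⊗ₜ c)) = counitFst ct A s ⊗ₜ c := by
  induction s using TensorProduct.induction_on with
  | zero => simp
  | tmul a x => simp [TensorProduct.smul_tmul']
  | add x y hx hy => simp only [TensorProduct.add_tmul, map_add, hx, hy]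

lemma counitFst_comulSnd (s : H ⊗[k] H) :
    counitFst ct _ (comulSnd cm s) = cm (counitFst ct H s) := by
  induction s using TensorProduct.induction_on with
  | zero => simp
  | tmul a b => simp
  | add x y hx hy => simp only [map_add, hx, hy]

lemma counitFst_counitFst_comulLeg₃ (x : H ⊗[k] (H ⊗[k] H)) :
    counitFst ct (H ⊗[k] H) (counitFst ct _ (comulLeg₃ cm x))
      = cm (counitFst ct H (counitSnd ct x)) := by
  induction x using TensorProduct.induction_on with
  | zero => simp
  | tmul a s => simp [counitFst_comulSnd]
  | add x y hx hy => simp only [map_add, hx, hy]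

lemma counitFst_counitFst_tmulOneRight (x : H ⊗[k] (H ⊗[k] H)) :
    counitFst ct (H ⊗[k] H) (counitFst ct _ (tmulOneRight k H x))
      = counitFst ct H (counitSnd ct x) ⊗ₜ 1 := by
  induction x using TensorProduct.induction_on with
  | zero => simp
  | tmul a s =>
    induction s using TensorProduct.induction_on with
    | zero => simp
    | tmul b c => simp [TensorProduct.smul_tmul', mul_comm]
    | add x y hx hy =>
      simp only [TensorProduct.tmul_add, map_add, hx, hy, TensorProduct.add_tmul]
  | add x y hx hy => simp only [map_add, hx, hy, TensorProduct.add_tmul]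

variable {cm ct} (hε : ∀ h, counitFst ct H (cm h) = h)
include hε

lemma counitFst_comulFst (s : H ⊗[k] H) : counitFst ct (H ⊗[k] H) (comulFst cm s) = s := by
  induction s using TensorProduct.induction_on with
  | zero => simp
  | tmul a b => rw [comulFst_tmul, counitFst_assoc, hε]
  | add x y hx hy => simp only [map_add, hx, hy]

lemma counitFst_comulLeg₁ (x : H ⊗[k] (H ⊗[k] H)) :
    counitFst ct (H ⊗[k] (H ⊗[k] H)) (comulLeg₁ cm x) = x := by
  induction x using TensorProduct.induction_on with
  | zero => simp
  | tmul a s => rw [comulLeg₁_tmul, counitFst_assoc, hε]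
  | add x y hx hy => simp only [map_add, hx, hy]

lemma counitFst_counitFst_comulLeg₂ (x : H ⊗[k] (H ⊗[k] H)) :
    counitFst ct (H ⊗[k] H) (counitFst ct _ (comulLeg₂ cm x)) = counitFst ct _ x := by
  induction x using TensorProduct.induction_on with
  | zero => simp
  | tmul a s => simp [counitFst_comulFst hε]
  | add x y hx hy => simp only [map_add, hx, hy]

end Counit

namespace QuasiHopf

variable {k H : Type} [Field k] [Ring H] [Algebra k H] (Q : QuasiHopf k H)

lemma comulSnd_comul (h : H) :
    comulSnd Q.comul (Q.comul h) = Q.phi * comulFst Q.comul (Q.comul h) * Q.phiInv :=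
  Q.quasi_coassoc h

lemma counitFst_comul (h : H) : counitFst Q.counit H (Q.comul h) = h := Q.counit_left h

lemma counitSnd_phi : counitSnd Q.counit Q.phi = 1 := Q.counit_phi

lemma pentagon_algHom :
    includeRight Q.phi * comulLeg₂ Q.comul Q.phi * tmulOneRight k H Q.phi
      = comulLeg₃ Q.comul Q.phi * comulLeg₁ Q.comul Q.phi :=
  Q.pentagon

lemma counitFst_phi : counitFst Q.counit (H ⊗[k] H) Q.phi = 1 := by
  set E := counitFst Q.counit (H ⊗[k] H) Q.phi
  have hε := Q.counitFst_comul
  have hE : E * E = E := by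
    simpa [counitFst_counitFst_comulLeg₂ hε, counitFst_comulLeg₁ hε,
      counitFst_counitFst_tmulOneRight, counitFst_counitFst_comulLeg₃, Q.counitSnd_phi,
      ← Algebra.TensorProduct.one_def]
      using congrArg (fun x => counitFst Q.counit (H ⊗[k] H) (counitFst Q.counit _ x))
        Q.pentagon_algHom
  have hinv : E * counitFst Q.counit _ Q.phiInv = 1 := by
    rw [← map_mul, Q.phi_inv, map_one]
  calc E = E * E * counitFst Q.counit _ Q.phiInv := by rw [mul_assoc, hinv, mul_one]
    _ = 1 := by rw [hE, hinv]

lemma map_phiInv_eq_one {A : Type*} [Semiring A] [Algebra k A]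
    (f : H ⊗[k] (H ⊗[k] H) →ₐ[k] A) (hf : f Q.phi = 1) : f Q.phiInv = 1 := by
  simpa [hf] using congrArg f Q.phi_inv

lemma counitFst_phiInv : counitFst Q.counit (H ⊗[k] H) Q.phiInv = 1 :=
  Q.map_phiInv_eq_one _ Q.counitFst_phi

lemma counitSnd_phiInv : counitSnd Q.counit Q.phiInv = 1 :=
  Q.map_phiInv_eq_one _ Q.counitSnd_phi

def phiUnit : (H ⊗[k] (H ⊗[k] H))ˣ := ⟨Q.phi, Q.phiInv, Q.phi_inv, Q.inv_phi⟩

lemma pentagon_phiInv :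
    tmulOneRight k H Q.phi * comulLeg₁ Q.comul Q.phiInv * comulLeg₃ Q.comul Q.phiInv
        * includeRight Q.phi = comulLeg₂ Q.comul Q.phiInv := by
  let U (f : H ⊗[k] (H ⊗[k] H) →ₐ[k] H ⊗[k] (H ⊗[k] (H ⊗[k] H))) :=
    Units.map f.toMonoidHom Q.phiUnit
  have hP : U includeRight * U (comulLeg₂ Q.comul) * U (tmulOneRight k H)
      = U (comulLeg₃ Q.comul) * U (comulLeg₁ Q.comul) := Units.ext Q.pentagon_algHom
  have hU : U (tmulOneRight k H) * (U (comulLeg₁ Q.comul))⁻¹ * (U (comulLeg₃ Q.comul))⁻¹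
      * U includeRight = (U (comulLeg₂ Q.comul))⁻¹ := by
    rw [mul_assoc (U _), ← mul_inv_rev, ← hP]
    group
  exact congrArg Units.val hU

lemma bosonCoeff_assoc (h g f : H) :
    tmulOneRight k H Q.phi * comulLeg₁ Q.comul Q.phiInv
        * (comulLeg₃ Q.comul (bosonCoeff Q.comul Q.phiInv h g) * (1 ⊗ₜ (1 ⊗ₜ (1 ⊗ₜ f))))
      = comulLeg₂ Q.comul Q.phiInv * (1 ⊗ₜ comulFst Q.comul (Q.comul h))
        * (1 ⊗ₜ bosonCoeff Q.comul Q.phiInv g f) := by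
  rw [← Q.pentagon_phiInv]
  simp only [bosonCoeff, map_mul, comulLeg₃_tmul, comulSnd_tmul, Q.comulSnd_comul, mul_assoc,
    Algebra.TensorProduct.includeRight_apply, Algebra.TensorProduct.tmul_mul_tmul, mul_one]

end QuasiHopf

section ModuleAlgebra

open LinearMap

variable {k H B : Type*} [CommSemiring k] [Semiring H] [Algebra k H] [AddCommMonoid B]
  [Module k B] [Module H B] [IsScalarTower k H B] (mulB : B →ₗ[k] B →ₗ[k] B)

def actMul₂ (b c : B) : H ⊗[k] H →ₗ[k] B :=
  lift mulB ∘ₗ map (id.smulRight b) (id.smulRight c)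

def actMul₃ (b c d : B) : H ⊗[k] (H ⊗[k] H) →ₗ[k] B :=
  lift mulB ∘ₗ map (id.smulRight b) (actMul₂ mulB c d)

def actMulTmul₂ (b c : B) : H ⊗[k] (H ⊗[k] H) →ₗ[k] B ⊗[k] H :=
  rTensor H (actMul₂ mulB b c) ∘ₗ (TensorProduct.assoc k H H H).symm.toLinearMap

def actMulTmul₃ (b c d : B) : H ⊗[k] (H ⊗[k] (H ⊗[k] H)) →ₗ[k] B ⊗[k] H :=
  rTensor H (actMul₃ mulB b c d) ∘ₗ (TensorProduct.assoc k H (H ⊗[k] H) H).symm.toLinearMap ∘ₗ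
    lTensor H (TensorProduct.assoc k H H H).symm.toLinearMap

section
variable (b c d : B) (p q r w : H)

@[simp] lemma actMul₂_tmul : actMul₂ mulB b c (p ⊗ₜ q) = mulB (p • b) (q • c) := rfl

@[simp] lemma actMul₃_tmul :
    actMul₃ mulB b c d (p ⊗ₜ (q ⊗ₜ r)) = mulB (p • b) (mulB (q • c) (r • d)) := rfl

@[simp] lemma actMulTmul₂_tmul :
    actMulTmul₂ mulB b c (p ⊗ₜ (q ⊗ₜ r)) = mulB (p • b) (q • c) ⊗ₜ r := rfl

@[simp] lemma actMulTmul₃_tmul :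
    actMulTmul₃ mulB b c d (p ⊗ₜ (q ⊗ₜ (r ⊗ₜ w))) = mulB (p • b) (mulB (q • c) (r • d)) ⊗ₜ w :=
  rfl

lemma actMulTmul₃_mul_tmul (X : H ⊗[k] (H ⊗[k] (H ⊗[k] H))) :
    actMulTmul₃ mulB b c d (X * (p ⊗ₜ (q ⊗ₜ (r ⊗ₜ w))))
      = lTensor B (mulRight k w) (actMulTmul₃ mulB (p • b) (q • c) (r • d) X) := by
  have key : actMulTmul₃ mulB b c d ∘ₗ mulRight k (p ⊗ₜ[k] (q ⊗ₜ[k] (r ⊗ₜ[k] w)))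
      = lTensor B (mulRight k w) ∘ₗ actMulTmul₃ mulB (p • b) (q • c) (r • d) := by
    ext
    simp [mul_smul]
  exact LinearMap.congr_fun key X

lemma actMulTmul₃_tmulOneRight (t : H ⊗[k] (H ⊗[k] H)) :
    actMulTmul₃ mulB b c d (tmulOneRight k H t) = actMul₃ mulB b c d t ⊗ₜ 1 := by
  have key : actMulTmul₃ mulB b c d ∘ₗ (tmulOneRight k H).toLinearMap
      = (TensorProduct.mk k B H).flip 1 ∘ₗ actMul₃ mulB b c d := by
    ext
    simp
  exact LinearMap.congr_fun key t

end

variable {mulB} {cm : H →ₐ[k] H ⊗[k] H} {φ : H ⊗[k] (H ⊗[k] H)}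

lemma smul_mul_eq_actMul₂
    (hmod : ∀ (h : H) (b c : B) (n : ℕ) (h1 h2 : Fin n → H),
      cm h = ∑ j, h1 j ⊗ₜ[k] h2 j → h • mulB b c = ∑ j, mulB (h1 j • b) (h2 j • c))
    (h : H) (b c : B) : h • mulB b c = actMul₂ mulB b c (cm h) := by
  obtain ⟨n, h1, h2, hrep⟩ := TensorProduct.exists_sum_tmul_eq (cm h)
  simp [hmod h b c n h1 h2 hrep, hrep]

lemma mul_mul_eq_actMul₃
    (hassoc : ∀ (b c d : B) (nX : ℕ) (X1 X2 X3 : Fin nX → H),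
      φ = ∑ i, X1 i ⊗ₜ[k] (X2 i ⊗ₜ[k] X3 i) →
      mulB (mulB b c) d = ∑ i, mulB (X1 i • b) (mulB (X2 i • c) (X3 i • d)))
    (b c d : B) : mulB (mulB b c) d = actMul₃ mulB b c d φ := by
  obtain ⟨n, X1, X2, X3, hrep⟩ := TensorProduct.exists_sum_tmul_tmul_eq φ
  simp [hassoc b c d n X1 X2 X3 hrep, hrep]

lemma actMulTmul₂_mul_left (hmod : ∀ (h : H) (b c : B), h • mulB b c = actMul₂ mulB b c (cm h))
    (hassoc : ∀ b c d : B, mulB (mulB b c) d = actMul₃ mulB b c d φ) (b c d : B)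
    (s : H ⊗[k] (H ⊗[k] H)) :
    actMulTmul₂ mulB (mulB b c) d s
      = actMulTmul₃ mulB b c d (tmulOneRight k H φ * comulLeg₁ cm s) := by
  have assoc_tmul_tmul (t : H ⊗[k] H) (q r : H) : mulB (actMul₂ mulB b c t) (q • d) ⊗ₜ r
      = actMulTmul₃ mulB b c d
          (tmulOneRight k H φ * TensorProduct.assoc k H H (H ⊗[k] H) (t ⊗ₜ (q ⊗ₜ r))) := by
    induction t using TensorProduct.induction_on with
    | zero => simp
    | tmul a a' =>
      rw [actMul₂_tmul, hassoc, TensorProduct.assoc_tmul, actMulTmul₃_mul_tmul,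
        actMulTmul₃_tmulOneRight, lTensor_tmul, mulRight_apply, one_mul]
    | add x y hx hy => simp only [map_add, LinearMap.add_apply, add_tmul, mul_add, hx, hy]
  have key : actMulTmul₂ mulB (mulB b c) d
      = actMulTmul₃ mulB b c d ∘ₗ mulLeft k (tmulOneRight k H φ) ∘ₗ (comulLeg₁ cm).toLinearMap := by
    ext p q r
    simpa [hmod] using assoc_tmul_tmul (cm p) q r
  exact LinearMap.congr_fun key s

lemma actMulTmul₂_mul_right (hmod : ∀ (h : H) (b c : B), h • mulB b c = actMul₂ mulB b c (cm h))
    (b c d : B) (s : H ⊗[k] (H ⊗[k] H)) :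
    actMulTmul₂ mulB b (mulB c d) s = actMulTmul₃ mulB b c d (comulLeg₂ cm s) := by
  have tmul_assoc_tmul (p r : H) (t : H ⊗[k] H) : mulB (p • b) (actMul₂ mulB c d t) ⊗ₜ r
      = actMulTmul₃ mulB b c d (p ⊗ₜ TensorProduct.assoc k H H H (t ⊗ₜ r)) := by
    induction t using TensorProduct.induction_on with
    | zero => simp
    | tmul a a' => simp
    | add x y hx hy => simp only [map_add, add_tmul, tmul_add, hx, hy]
  have key : actMulTmul₂ mulB b (mulB c d)
      = actMulTmul₃ mulB b c d ∘ₗ (comulLeg₂ cm).toLinearMap := by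
    ext p q r
    simpa [hmod] using tmul_assoc_tmul p r (cm q)
  exact LinearMap.congr_fun key s

variable {oneB : B} {ct : H →ₐ[k] k}

lemma actMulTmul₂_one_left (hone : ∀ h : H, h • oneB = ct h • oneB)
    (hunit : ∀ b : B, mulB oneB b = b) (c : B) (s : H ⊗[k] (H ⊗[k] H)) :
    actMulTmul₂ mulB oneB c s = rTensor H (id.smulRight c) (counitFst ct (H ⊗[k] H) s) := by
  have key : actMulTmul₂ mulB oneB c
      = rTensor H (id.smulRight c) ∘ₗ (counitFst ct (H ⊗[k] H)).toLinearMap := by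
    ext p q r
    simp [hone, hunit, smul_tmul']
  exact LinearMap.congr_fun key s

lemma actMulTmul₂_one_right (hone : ∀ h : H, h • oneB = ct h • oneB)
    (hunit : ∀ b : B, mulB b oneB = b) (b : B) (s : H ⊗[k] (H ⊗[k] H)) :
    actMulTmul₂ mulB b oneB s = rTensor H (id.smulRight b) (counitSnd ct s) := by
  have key : actMulTmul₂ mulB b oneB
      = rTensor H (id.smulRight b) ∘ₗ (counitSnd ct).toLinearMap := by
    ext p q r
    simp [hone, hunit, smul_tmul']
  exact LinearMap.congr_fun key s

end ModuleAlgebra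

section Bosonisation

open LinearMap

variable {k H B : Type*} [CommSemiring k] [Semiring H] [Algebra k H] [AddCommMonoid B]
  [Module k B] [Module H B] [IsScalarTower k H B] {mulB : B →ₗ[k] B →ₗ[k] B}
  {cm : H →ₐ[k] H ⊗[k] H} {φ ψ : H ⊗[k] (H ⊗[k] H)}
  {μ : B ⊗[k] H →ₗ[k] B ⊗[k] H →ₗ[k] B ⊗[k] H}

variable (mulB cm ψ μ) in
def IsBosonMul : Prop :=
  ∀ (b : B) (h : H) (c : B) (g : H),
    μ (b ⊗ₜ h) (c ⊗ₜ g) = actMulTmul₂ mulB b c (bosonCoeff cm ψ h g)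

lemma IsBosonMul.apply_actMulTmul₂_tmul (hμ : IsBosonMul mulB cm ψ μ)
    (hmod : ∀ (h : H) (b c : B), h • mulB b c = actMul₂ mulB b c (cm h))
    (hassoc : ∀ b c d : B, mulB (mulB b c) d = actMul₃ mulB b c d φ)
    (b c d : B) (f : H) (t : H ⊗[k] (H ⊗[k] H)) :
    μ (actMulTmul₂ mulB b c t) (d ⊗ₜ f) = actMulTmul₃ mulB b c d
      (tmulOneRight k H φ * comulLeg₁ cm ψ * (comulLeg₃ cm t * (1 ⊗ₜ (1 ⊗ₜ (1 ⊗ₜ f))))) := by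
  have key : μ.flip (d ⊗ₜ f) ∘ₗ actMulTmul₂ mulB b c = actMulTmul₃ mulB b c d
      ∘ₗ mulLeft k (tmulOneRight k H φ * comulLeg₁ cm ψ)
      ∘ₗ mulRight k (1 ⊗ₜ[k] (1 ⊗ₜ[k] (1 ⊗ₜ[k] f))) ∘ₗ (comulLeg₃ cm).toLinearMap := by
    ext u v w
    have shift : tmulOneRight k H φ * comulLeg₁ cm ψ
          * (comulLeg₃ cm (u ⊗ₜ (v ⊗ₜ w)) * (1 ⊗ₜ (1 ⊗ₜ (1 ⊗ₜ f))))
        = tmulOneRight k H φ * comulLeg₁ cm (bosonCoeff cm ψ w f) * (u ⊗ₜ (v ⊗ₜ (1 ⊗ₜ 1))) := by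
      simp only [bosonCoeff, map_mul, comulLeg₁_one_tmul, comulLeg₃_tmul, comulSnd_tmul, mul_assoc,
        Algebra.TensorProduct.tmul_mul_tmul, one_mul, mul_one]
    simp only [AlgebraTensorModule.curry_apply, curry_apply, coe_restrictScalars, comp_apply,
      flip_apply, actMulTmul₂_tmul, hμ _ _ _ _, actMulTmul₂_mul_left hmod hassoc,
      AlgHom.toLinearMap_apply, mulRight_apply, mulLeft_apply, shift, actMulTmul₃_mul_tmul,
      one_smul, mulRight_one, lTensor_id, id_apply]
  exact LinearMap.congr_fun key t

lemma IsBosonMul.apply_tmul_actMulTmul₂ (hμ : IsBosonMul mulB cm ψ μ)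
    (hmod : ∀ (h : H) (b c : B), h • mulB b c = actMul₂ mulB b c (cm h))
    (b c d : B) (h : H) (t : H ⊗[k] (H ⊗[k] H)) :
    μ (b ⊗ₜ h) (actMulTmul₂ mulB c d t)
      = actMulTmul₃ mulB b c d (comulLeg₂ cm ψ * (1 ⊗ₜ comulFst cm (cm h)) * (1 ⊗ₜ t)) := by
  have key : μ (b ⊗ₜ h) ∘ₗ actMulTmul₂ mulB c d = actMulTmul₃ mulB b c d
      ∘ₗ mulLeft k (comulLeg₂ cm ψ * (1 ⊗ₜ comulFst cm (cm h)))
      ∘ₗ (Algebra.TensorProduct.includeRight (R := k) (A := H)).toLinearMap := by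
    ext u v w
    have shift : comulLeg₂ cm ψ * (1 ⊗ₜ comulFst cm (cm h)) * (1 ⊗ₜ (u ⊗ₜ (v ⊗ₜ w)))
        = comulLeg₂ cm (bosonCoeff cm ψ h w) * (1 ⊗ₜ (u ⊗ₜ (v ⊗ₜ 1))) := by
      simp only [bosonCoeff, map_mul, comulLeg₂_tmul, comulFst_one_tmul, mul_assoc,
        Algebra.TensorProduct.tmul_mul_tmul, one_mul, mul_one]
    simp only [AlgebraTensorModule.curry_apply, curry_apply, coe_restrictScalars, comp_apply,
      actMulTmul₂_tmul, hμ _ _ _ _, actMulTmul₂_mul_right hmod, AlgHom.toLinearMap_apply,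
      mulLeft_apply, Algebra.TensorProduct.includeRight_apply, shift, actMulTmul₃_mul_tmul,
      one_smul, mulRight_one, lTensor_id, id_apply]
  exact LinearMap.congr_fun key t

lemma isBosonMul_of_sweedler
    (hμ : ∀ (b : B) (h : H) (c : B) (g : H)
        (nx : ℕ) (x1 x2 x3 : Fin nx → H) (n : ℕ) (h1 h2 : Fin n → H),
      ψ = ∑ i, x1 i ⊗ₜ[k] (x2 i ⊗ₜ[k] x3 i) →
      cm h = ∑ j, h1 j ⊗ₜ[k] h2 j →
      μ (b ⊗ₜ[k] h) (c ⊗ₜ[k] g)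
        = ∑ i, ∑ j, (mulB (x1 i • b) ((x2 i * h1 j) • c)) ⊗ₜ[k] (x3 i * h2 j * g)) :
    IsBosonMul mulB cm ψ μ := by
  intro b h c g
  obtain ⟨nx, x1, x2, x3, hx⟩ := TensorProduct.exists_sum_tmul_tmul_eq ψ
  obtain ⟨n, h1, h2, hh⟩ := TensorProduct.exists_sum_tmul_eq (cm h)
  rw [hμ b h c g nx x1 x2 x3 n h1 h2 hx hh, bosonCoeff, hx, hh]
  simp only [tmul_sum, Finset.sum_mul, Finset.mul_sum, Algebra.TensorProduct.tmul_mul_tmul,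
    mul_one, map_sum, actMulTmul₂_tmul, mul_assoc]
  exact Finset.sum_comm

variable {oneB : B} {ct : H →ₐ[k] k}

lemma IsBosonMul.one_tmul_one_mul (hμ : IsBosonMul mulB cm ψ μ)
    (hone : ∀ h : H, h • oneB = ct h • oneB) (hunit : ∀ b : B, mulB oneB b = b)
    (hψ : counitFst ct (H ⊗[k] H) ψ = 1) (c : B) (g : H) : μ (oneB ⊗ₜ 1) (c ⊗ₜ g) = c ⊗ₜ g := by
  simp [hμ _ _ _ _, actMulTmul₂_one_left hone hunit, bosonCoeff, hψ]

lemma IsBosonMul.mul_one_tmul_one (hμ : IsBosonMul mulB cm ψ μ)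
    (hone : ∀ h : H, h • oneB = ct h • oneB) (hunit : ∀ b : B, mulB b oneB = b)
    (hψ : counitSnd ct ψ = 1) (hε : ∀ h, counitFst ct H (cm h) = h) (b : B) (h : H) :
    μ (b ⊗ₜ h) (oneB ⊗ₜ 1) = b ⊗ₜ h := by
  simp [hμ _ _ _ _, actMulTmul₂_one_right hone hunit, bosonCoeff, hψ, hε]

end Bosonisation

theorem stmt8_general {k H : Type} [Field k] [Ring H] [Algebra k H] (Q : QuasiHopf k H)
    (B : Type) [AddCommGroup B] [Module k B] [Module H B]
    [IsScalarTower k H B]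
    (mulB : B →ₗ[k] B →ₗ[k] B) (oneB : B)
    (hmod : ∀ (h : H) (b c : B) (n : ℕ) (h1 h2 : Fin n → H),
      Q.comul h = ∑ j, h1 j ⊗ₜ[k] h2 j →
      h • mulB b c = ∑ j, mulB (h1 j • b) (h2 j • c))
    (hone : ∀ h : H, h • oneB = Q.counit h • oneB)
    (hassoc : ∀ (b c d : B) (nX : ℕ) (X1 X2 X3 : Fin nX → H),
      Q.phi = ∑ i, X1 i ⊗ₜ[k] (X2 i ⊗ₜ[k] X3 i) →
      mulB (mulB b c) d = ∑ i, mulB (X1 i • b) (mulB (X2 i • c) (X3 i • d)))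
    (hunit : ∀ b : B, mulB oneB b = b ∧ mulB b oneB = b)
    (μ : B ⊗[k] H →ₗ[k] B ⊗[k] H →ₗ[k] B ⊗[k] H)
    (hμ : ∀ (b : B) (h : H) (c : B) (g : H)
        (nx : ℕ) (x1 x2 x3 : Fin nx → H) (n : ℕ) (h1 h2 : Fin n → H),
      Q.phiInv = ∑ i, x1 i ⊗ₜ[k] (x2 i ⊗ₜ[k] x3 i) →
      Q.comul h = ∑ j, h1 j ⊗ₜ[k] h2 j →
      μ (b ⊗ₜ[k] h) (c ⊗ₜ[k] g)
        = ∑ i, ∑ j, (mulB (x1 i • b) ((x2 i * h1 j) • c)) ⊗ₜ[k] (x3 i * h2 j * g)) :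
    (∀ X Y Z : B ⊗[k] H, μ (μ X Y) Z = μ X (μ Y Z))
      ∧ (∀ X : B ⊗[k] H, μ (oneB ⊗ₜ[k] (1 : H)) X = X ∧ μ X (oneB ⊗ₜ[k] (1 : H)) = X) := by
  have hmod' := smul_mul_eq_actMul₂ hmod
  have hassoc' := mul_mul_eq_actMul₃ hassoc
  have hμ' : IsBosonMul mulB Q.comul Q.phiInv μ := isBosonMul_of_sweedler hμ
  have hleft : μ (oneB ⊗ₜ 1) = LinearMap.id := TensorProduct.ext' fun c g =>
    hμ'.one_tmul_one_mul hone (fun b => (hunit b).1) Q.counitFst_phiInv c g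
  have hright : μ.flip (oneB ⊗ₜ 1) = LinearMap.id := TensorProduct.ext' fun b h =>
    hμ'.mul_one_tmul_one hone (fun b => (hunit b).2) Q.counitSnd_phiInv Q.counitFst_comul b h
  refine ⟨TensorProduct.bilinear_assoc_of_tmul μ fun b c d h g f => ?_,
    fun X => ⟨LinearMap.congr_fun hleft X, LinearMap.congr_fun hright X⟩⟩
  rw [hμ' b h c g, hμ'.apply_actMulTmul₂_tmul hmod' hassoc', hμ' c g d f,
    hμ'.apply_tmul_actMulTmul₂ hmod', Q.bosonCoeff_assoc]

/-- if `B` is a quasi-associative unital `H`-module algebra (an algebra in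
the category of left `H`-modules, with the associativity constraint given by `φ`), then
the bosonisation product on `B ⊗ H`,
`(b⊗h)(c⊗g) = (x¹▷b)·(x²h₁▷c) ⊗ x³h₂g`, is associative with two-sided unit `1_B ⊗ 1`. -/
theorem stmt8 {k H : Type} [Field k] [Ring H] [Algebra k H] (Q : QuasiHopf k H)
    (B : Type) [AddCommGroup B] [Module k B] [Module H B]
    [IsScalarTower k H B] [SMulCommClass k H B]
    (mulB : B →ₗ[k] B →ₗ[k] B) (oneB : B)
    (hmod : ∀ (h : H) (b c : B) (n : ℕ) (h1 h2 : Fin n → H),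
      Q.comul h = ∑ j, h1 j ⊗ₜ[k] h2 j →
      h • mulB b c = ∑ j, mulB (h1 j • b) (h2 j • c))
    (hone : ∀ h : H, h • oneB = Q.counit h • oneB)
    (hassoc : ∀ (b c d : B) (nX : ℕ) (X1 X2 X3 : Fin nX → H),
      Q.phi = ∑ i, X1 i ⊗ₜ[k] (X2 i ⊗ₜ[k] X3 i) →
      mulB (mulB b c) d = ∑ i, mulB (X1 i • b) (mulB (X2 i • c) (X3 i • d)))
    (hunit : ∀ b : B, mulB oneB b = b ∧ mulB b oneB = b)
    (μ : B ⊗[k] H →ₗ[k] B ⊗[k] H →ₗ[k] B ⊗[k] H)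
    (hμ : ∀ (b : B) (h : H) (c : B) (g : H)
        (nx : ℕ) (x1 x2 x3 : Fin nx → H) (n : ℕ) (h1 h2 : Fin n → H),
      Q.phiInv = ∑ i, x1 i ⊗ₜ[k] (x2 i ⊗ₜ[k] x3 i) →
      Q.comul h = ∑ j, h1 j ⊗ₜ[k] h2 j →
      μ (b ⊗ₜ[k] h) (c ⊗ₜ[k] g)
        = ∑ i, ∑ j, (mulB (x1 i • b) ((x2 i * h1 j) • c)) ⊗ₜ[k] (x3 i * h2 j * g)) :
    (∀ X Y Z : B ⊗[k] H, μ (μ X Y) Z = μ X (μ Y Z))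
      ∧ (∀ X : B ⊗[k] H, μ (oneB ⊗ₜ[k] (1 : H)) X = X ∧ μ X (oneB ⊗ₜ[k] (1 : H)) = X) :=
  stmt8_general Q B mulB oneB hmod hone hassoc hunit μ hμ
end

section
/- For all s, g, h, k ∈ G the 2-cocycle identity θ_s(g,h)·θ_s(gh,k) = θ_s(g,hk)·θ_{g⁻¹sg}(h,k) holds in kˣ. -/
/-!
Write `t = g⁻¹sg`, `u = h⁻¹th`, `v = k⁻¹uk`. After expanding all four factors, the defect
`θ_s(g,h) θ_s(gh,k) / (θ_s(g,hk) θ_t(h,k))` equals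
`dφ(g,t,h,k) · dφ(s,g,h,k)⁻¹ · dφ(g,h,u,k)⁻¹ · dφ(g,h,k,v)`, and every factor is trivial
because `φ` is a 3-cocycle.
-/

variable {G M : Type*} [Group G] [CommGroup M]

def IsThreeCocycle (φ : G → G → G → M) : Prop :=
  ∀ a b c d : G, φ b c d * φ a (b * c) d * φ a b c = φ a b (c * d) * φ (a * b) c d

/-- The 2-cochain `θ_s` attached to a 3-cochain `φ` and an element `s`. -/
def conjTwist (φ : G → G → G → M) (s g h : G) : M :=
  φ g (g⁻¹ * s * g) h * (φ s g h)⁻¹ * (φ g h (h⁻¹ * g⁻¹ * s * g * h))⁻¹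

theorem conjTwist_eq_of_mul_eq (φ : G → G → G → M) {s g h t u : G}
    (ht : s * g = g * t) (hu : t * h = h * u) :
    conjTwist φ s g h = φ g t h * (φ s g h)⁻¹ * (φ g h u)⁻¹ := by
  obtain rfl : t = g⁻¹ * s * g := by rw [mul_assoc, ht, inv_mul_cancel_left]
  obtain rfl : u = h⁻¹ * (g⁻¹ * s * g) * h := by rw [mul_assoc, hu, inv_mul_cancel_left]
  simp only [conjTwist, mul_assoc]

theorem IsThreeCocycle.conjTwist_mul_conjTwist {φ : G → G → G → M} (hφ : IsThreeCocycle φ)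
    (s g h k : G) :
    conjTwist φ s g h * conjTwist φ s (g * h) k =
      conjTwist φ s g (h * k) * conjTwist φ (g⁻¹ * s * g) h k := by
  obtain ⟨t, ht⟩ : ∃ t, s * g = g * t := ⟨g⁻¹ * s * g, by group⟩
  obtain ⟨u, hu⟩ : ∃ u, t * h = h * u := ⟨h⁻¹ * t * h, by group⟩
  obtain ⟨v, hv⟩ : ∃ v, u * k = k * v := ⟨k⁻¹ * u * k, by group⟩
  have hgh : s * (g * h) = g * h * u := by rw [← mul_assoc, ht, mul_assoc, hu, mul_assoc]
  have hhk : t * (h * k) = h * k * v := by rw [← mul_assoc, hu, mul_assoc, hv, mul_assoc]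
  obtain rfl : t = g⁻¹ * s * g := by rw [mul_assoc, ht, inv_mul_cancel_left]
  rw [conjTwist_eq_of_mul_eq φ ht hu, conjTwist_eq_of_mul_eq φ hgh hv,
    conjTwist_eq_of_mul_eq φ ht hhk, conjTwist_eq_of_mul_eq φ hu hv]
  have h1 := congrArg Additive.ofMul (hφ s g h k)
  have h2 := congrArg Additive.ofMul (hφ g (g⁻¹ * s * g) h k)
  have h3 := congrArg Additive.ofMul (hφ g h u k)
  have h4 := congrArg Additive.ofMul (hφ g h k v)
  rw [← ht] at h2
  rw [← hu] at h3
  rw [← hv] at h4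
  apply Additive.ofMul.injective
  simp only [ofMul_mul, ofMul_inv] at h1 h2 h3 h4 ⊢
  linear_combination (norm := abel) h2 - h1 - h3 + h4

theorem stmt12_general {G : Type} [Group G] {k : Type} [Field k]
    (φ : G → G → G → kˣ)
    (hcoc : ∀ a b c d : G,
      φ b c d * φ a (b * c) d * φ a b c = φ a b (c * d) * φ (a * b) c d)
    (θ : G → G → G → kˣ)
    (hθ : ∀ s g h : G,
      θ s g h = φ g (g⁻¹ * s * g) h * (φ s g h)⁻¹ * (φ g h (h⁻¹ * g⁻¹ * s * g * h))⁻¹)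
    (s g h K : G) :
    θ s g h * θ s (g * h) K = θ s g (h * K) * θ (g⁻¹ * s * g) h K := by
  obtain rfl : θ = conjTwist φ := funext₃ hθ
  exact IsThreeCocycle.conjTwist_mul_conjTwist hcoc s g h K

/-- for a finite group `G` and a normalized 3-cocycle `φ` with values in
`kˣ`, the function `θ_s(g,h) = φ(g,g⁻¹sg,h)·φ(s,g,h)⁻¹·φ(g,h,h⁻¹g⁻¹sgh)⁻¹` satisfies
the 2-cocycle identity `θ_s(g,h)·θ_s(gh,K) = θ_s(g,hK)·θ_{g⁻¹sg}(h,K)`. -/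
theorem stmt12 {G : Type} [Group G] [Fintype G] {k : Type} [Field k]
    (φ : G → G → G → kˣ)
    (hcoc : ∀ a b c d : G,
      φ b c d * φ a (b * c) d * φ a b c = φ a b (c * d) * φ (a * b) c d)
    (hnorm : ∀ a b : G, φ a 1 b = 1)
    (θ : G → G → G → kˣ)
    (hθ : ∀ s g h : G,
      θ s g h = φ g (g⁻¹ * s * g) h * (φ s g h)⁻¹ * (φ g h (h⁻¹ * g⁻¹ * s * g * h))⁻¹)
    (s g h K : G) :
    θ s g h * θ s (g * h) K = θ s g (h * K) * θ (g⁻¹ * s * g) h K :=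
  stmt12_general φ hcoc θ hθ s g h K
end

section
/- For all s, t, g, h ∈ G the compatibility identity θ_s(g,h)·θ_t(g,h)·γ_g(s,t)·γ_h(g⁻¹sg, g⁻¹tg) = θ_{st}(g,h)·γ_{gh}(s,t) holds in kˣ. -/
/-!
Put `s' = g⁻¹ s g`, `t' = g⁻¹ t g` and `x'' = h⁻¹ x' h`. Each of `θ` and `γ` is a ratio of three
values of `φ`, so after expanding, the identity compares two products of `φ`-values. Written
additively, their difference is a signed sum of six instances of the cocycle identity, at
`(g, s', h, t'')` and `(s, g, t', h)` with sign `+` and at `(g, s', t', h)`, `(g, h, s'', t'')`,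
`(s, g, h, t'')` and `(s, t, g, h)` with sign `-`.
-/

variable {G A : Type*} [Group G] [CommGroup A]

def cocycleTheta (φ : G → G → G → A) (s g h : G) : A :=
  φ g (g⁻¹ * s * g) h * (φ s g h)⁻¹ * (φ g h (h⁻¹ * g⁻¹ * s * g * h))⁻¹

def cocycleGamma (φ : G → G → G → A) (g a b : G) : A :=
  φ a g (g⁻¹ * b * g) * (φ a b g)⁻¹ * (φ g (g⁻¹ * a * g) (g⁻¹ * b * g))⁻¹

theorem cocycleTheta_cocycleGamma_compatibility (φ : G → G → G → A)
    (hcoc : ∀ a b c d : G,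
      φ b c d * φ a (b * c) d * φ a b c = φ a b (c * d) * φ (a * b) c d) (s t g h : G) :
    cocycleTheta φ s g h * cocycleTheta φ t g h * cocycleGamma φ g s t *
        cocycleGamma φ h (g⁻¹ * s * g) (g⁻¹ * t * g)
      = cocycleTheta φ (s * t) g h * cocycleGamma φ (g * h) s t := by
  let ψ a b c := Additive.ofMul (φ a b c)
  have hψ (a b c d : G) : ψ b c d + ψ a (b * c) d + ψ a b c = ψ a b (c * d) + ψ (a * b) c d :=
    congrArg Additive.ofMul (hcoc a b c d)
  have h₁ := hψ g (g⁻¹ * s * g) h (h⁻¹ * g⁻¹ * t * g * h)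
  have h₂ := hψ s g (g⁻¹ * t * g) h
  have h₃ := hψ g (g⁻¹ * s * g) (g⁻¹ * t * g) h
  have h₄ := hψ g h (h⁻¹ * g⁻¹ * s * g * h) (h⁻¹ * g⁻¹ * t * g * h)
  have h₅ := hψ s g h (h⁻¹ * g⁻¹ * t * g * h)
  have h₆ := hψ s t g h
  apply Additive.ofMul.injective
  simp only [cocycleTheta, cocycleGamma, ofMul_mul, ofMul_inv]
  simp only [mul_assoc, mul_inv_rev, mul_inv_cancel_left] at h₁ h₂ h₃ h₄ h₅ h₆ ⊢
  linear_combination (norm := module) h₁ + h₂ - h₃ - h₄ - h₅ - h₆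

theorem stmt13_general {G : Type} [Group G] {k : Type} [Field k]
    (φ : G → G → G → kˣ)
    (hcoc : ∀ a b c d : G,
      φ b c d * φ a (b * c) d * φ a b c = φ a b (c * d) * φ (a * b) c d)
    (θ : G → G → G → kˣ)
    (hθ : ∀ s g h : G,
      θ s g h = φ g (g⁻¹ * s * g) h * (φ s g h)⁻¹ * (φ g h (h⁻¹ * g⁻¹ * s * g * h))⁻¹)
    (γ : G → G → G → kˣ)
    (hγ : ∀ g a b : G,
      γ g a b = φ a g (g⁻¹ * b * g) * (φ a b g)⁻¹ * (φ g (g⁻¹ * a * g) (g⁻¹ * b * g))⁻¹)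
    (s t g h : G) :
    θ s g h * θ t g h * γ g s t * γ h (g⁻¹ * s * g) (g⁻¹ * t * g)
      = θ (s * t) g h * γ (g * h) s t := by
  obtain rfl : θ = cocycleTheta φ := funext₃ hθ
  obtain rfl : γ = cocycleGamma φ := funext₃ hγ
  exact cocycleTheta_cocycleGamma_compatibility φ hcoc s t g h

/-- for a finite group `G` and a normalized 3-cocycle `φ` with values in
`kˣ`, the functions `θ` and `γ` satisfy the compatibility identity
`θ_s(g,h)·θ_t(g,h)·γ_g(s,t)·γ_h(g⁻¹sg, g⁻¹tg) = θ_{st}(g,h)·γ_{gh}(s,t)`. -/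
theorem stmt13 {G : Type} [Group G] [Fintype G] {k : Type} [Field k]
    (φ : G → G → G → kˣ)
    (hcoc : ∀ a b c d : G,
      φ b c d * φ a (b * c) d * φ a b c = φ a b (c * d) * φ (a * b) c d)
    (hnorm : ∀ a b : G, φ a 1 b = 1)
    (θ : G → G → G → kˣ)
    (hθ : ∀ s g h : G,
      θ s g h = φ g (g⁻¹ * s * g) h * (φ s g h)⁻¹ * (φ g h (h⁻¹ * g⁻¹ * s * g * h))⁻¹)
    (γ : G → G → G → kˣ)
    (hγ : ∀ g a b : G,
      γ g a b = φ a g (g⁻¹ * b * g) * (φ a b g)⁻¹ * (φ g (g⁻¹ * a * g) (g⁻¹ * b * g))⁻¹)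
    (s t g h : G) :
    θ s g h * θ t g h * γ g s t * γ h (g⁻¹ * s * g) (g⁻¹ * t * g)
      = θ (s * t) g h * γ (g * h) s t :=
  stmt13_general φ hcoc θ hθ γ hγ s t g h
end

section
/- Write the associator of D^φ(G) as φ_D = X¹⊗X²⊗X³ with inverse x¹⊗x²⊗x³, set q = q¹⊗q² = X¹⊗S⁻¹(αX³)X², and let ▷ denote the adjoint action x▷y = x₁yS(x₂). Then the transmuted product m̲(b⊗b′) = q¹(x¹▷b)S(q²)x²b′S(x³) of D^φ(G) satisfies, for all g, h, s, t ∈ G: m̲((g⊗δ_s)⊗(h⊗δ_t)) = δ_{s,gtg⁻¹}·θ_s(g,h)·φ(s, g⁻¹s⁻¹g, g⁻¹sg)·φ(sg⁻¹s⁻¹g, g⁻¹sg, h⁻¹g⁻¹s⁻¹gh)⁻¹·(gh⊗δ_s). -/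
/-!
For a normalized cocycle the twists `θ_s(e, h)`, `θ_s(g, e)` and `γ_e(a, b)` are trivial, so the
elements `e ⊗ δ_u` are orthogonal idempotents acting on `g ⊗ δ_s` by Kronecker deltas, and `S`, `S⁻¹`
both send `e ⊗ δ_c` to `e ⊗ δ_{c⁻¹}`. Every term of the eightfold sum defining
`m̲((g ⊗ δ_s) ⊗ (h ⊗ δ_t))` is therefore a product of deltas times a multiple of `gh ⊗ δ_s`; the deltas
determine all eight summation indices, and the one surviving term carries the coefficient
`θ_s(g, h) φ(X¹, X², X³) φ(x¹, x², x³)⁻¹` of the claim.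
-/

open Finsupp

structure IsNormalizedCocycle {G M : Type*} [Mul G] [One G] [Mul M] [One M]
    (φ : G → G → G → M) : Prop where
  cocycle : ∀ a b c d : G, φ b c d * φ a (b * c) d * φ a b c = φ a b (c * d) * φ (a * b) c d
  one_mid : ∀ a b : G, φ a 1 b = 1

namespace IsNormalizedCocycle

variable {G M : Type*} [Monoid G] [LeftCancelMonoid M] {φ : G → G → G → M}

theorem one_left (hφ : IsNormalizedCocycle φ) (b c : G) : φ 1 b c = 1 := by
  have h := hφ.cocycle 1 1 b c
  simp only [hφ.one_mid, one_mul, mul_one] at h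
  exact mul_left_cancel (h.trans (mul_one _).symm)

theorem one_right (hφ : IsNormalizedCocycle φ) (a b : G) : φ a b 1 = 1 := by
  have h := hφ.cocycle a b 1 1
  simp only [hφ.one_mid, one_mul, mul_one] at h
  exact mul_left_cancel (h.trans (mul_one _).symm)

end IsNormalizedCocycle

section Twist

variable {G M : Type*} [Group G] [Group M]

def twistTheta (φ : G → G → G → M) (s g h : G) : M :=
  φ g (g⁻¹ * s * g) h * (φ s g h)⁻¹ * (φ g h (h⁻¹ * g⁻¹ * s * g * h))⁻¹

def twistGamma (φ : G → G → G → M) (g a b : G) : M :=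
  φ a g (g⁻¹ * b * g) * (φ a b g)⁻¹ * (φ g (g⁻¹ * a * g) (g⁻¹ * b * g))⁻¹

variable {φ : G → G → G → M}

theorem twistTheta_one_left (hφ : IsNormalizedCocycle φ) (s h : G) : twistTheta φ s 1 h = 1 := by
  simp [twistTheta, hφ.one_left, hφ.one_mid]

theorem twistTheta_one_right (hφ : IsNormalizedCocycle φ) (s g : G) : twistTheta φ s g 1 = 1 := by
  simp [twistTheta, hφ.one_right, hφ.one_mid]

theorem twistGamma_one_left (hφ : IsNormalizedCocycle φ) (a b : G) : twistGamma φ 1 a b = 1 := by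
  simp [twistGamma, hφ.one_left, hφ.one_right, hφ.one_mid]

end Twist

section TwistedDouble

variable {G k : Type*} [Group G] [CommSemiring k]

theorem antipode_single_one {θ γ : G → G → G → kˣ} {S : ((G × G) →₀ k) →ₗ[k] ((G × G) →₀ k)}
    (hS : ∀ g s : G, S (single (g, s) 1)
        = (((θ s⁻¹ g g⁻¹)⁻¹ * (γ g s s⁻¹)⁻¹ : kˣ) : k) • single (g⁻¹, s⁻¹) (1 : k))
    (hθ : ∀ s, θ s 1 1 = 1) (hγ : ∀ a b, γ 1 a b = 1) (c : G) :
    S (single (1, c) 1) = single (1, c⁻¹) 1 := by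
  simp [hS, hθ, hγ]

theorem single_one_of_leftInverse {S S' : ((G × G) →₀ k) →ₗ[k] ((G × G) →₀ k)}
    (hS' : Function.LeftInverse S' S) (hS : ∀ c : G, S (single (1, c) 1) = single (1, c⁻¹) 1)
    (c : G) : S' (single (1, c) 1) = single (1, c⁻¹) 1 := by
  rw [← hS' (single (1, c⁻¹) 1), hS, inv_inv]

variable [DecidableEq G]

/-- `single (g, s) 1` is the basis element `g ⊗ δ_s` of `D^φ(G)`. -/
def IsTwistedDoubleMul (m : ((G × G) →₀ k) →ₗ[k] ((G × G) →₀ k) →ₗ[k] ((G × G) →₀ k))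
    (θ : G → G → G → kˣ) : Prop :=
  ∀ g s h t : G, m (single (g, s) 1) (single (h, t) 1)
    = if s = g * t * g⁻¹ then (θ s g h : k) • single (g * h, s) (1 : k) else 0

variable {m : ((G × G) →₀ k) →ₗ[k] ((G × G) →₀ k) →ₗ[k] ((G × G) →₀ k)} {θ : G → G → G → kˣ}

theorem IsTwistedDoubleMul.single_mul_single (hm : IsTwistedDoubleMul m θ) (g s h t : G) :
    m (single (g, s) 1) (single (h, t) 1)
      = (if s = g * t * g⁻¹ then (θ s g h : k) else 0) • single (g * h, s) 1 := by
  rw [hm, ite_smul, zero_smul]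

theorem IsTwistedDoubleMul.sum_single_one_mul [Fintype G] (hm : IsTwistedDoubleMul m θ)
    (hθ : ∀ s h, θ s 1 h = 1) (h t : G) :
    m (∑ u : G, single (1, u) 1) (single (h, t) 1) = single (h, t) 1 := by
  simp [map_sum, hm.single_mul_single, hθ]

/-- The conditions are ordered from the innermost summation index of `stmt15` outwards, so that
the sum collapses one index at a time by `Finset.sum_ite_eq'`. -/
theorem IsTwistedDoubleMul.transmuted_summand_eq_ite [Fintype G] (hm : IsTwistedDoubleMul m θ)
    (hθ₁ : ∀ s h, θ s 1 h = 1) (hθ₂ : ∀ s g, θ s g 1 = 1) {φ γ : G → G → G → kˣ}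
    (hγ : ∀ a b, γ 1 a b = 1) {S S' : ((G × G) →₀ k) →ₗ[k] ((G × G) →₀ k)}
    (hS : ∀ c : G, S (single (1, c) 1) = single (1, c⁻¹) 1)
    (hS' : ∀ c : G, S' (single (1, c) 1) = single (1, c⁻¹) 1)
    (g s h t g₁ h₁ k₁ g₂ h₂ k₂ a c : G) :
    ((φ g₁ h₁ k₁ : k) * (((φ g₂ h₂ k₂)⁻¹ : kˣ) : k) * (if a * c = g₂ then (γ 1 a c : k) else 0)) •
        m (m (m (m (m (single (1, g₁) 1) (m (m (single (1, a) 1) (single (g, s) 1))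
                    (S (single (1, c) 1))))
                (S (m (S' (m (∑ u : G, single (1, u) 1) (single (1, k₁) 1))) (single (1, h₁) 1))))
              (single (1, h₂) 1))
            (single (h, t) 1))
          (S (single (1, k₂) 1))
      = if c = g⁻¹ * s⁻¹ * g ∧ a = s ∧ k₂ = h⁻¹ * g⁻¹ * s⁻¹ * g * h ∧ h₂ = g⁻¹ * s * g
            ∧ g₂ = s * g⁻¹ * s⁻¹ * g ∧ k₁ = g⁻¹ * s * g ∧ h₁ = g⁻¹ * s⁻¹ * g ∧ g₁ = s
            ∧ s = g * t * g⁻¹ then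
          ((θ s g h : k) * (φ s (g⁻¹ * s⁻¹ * g) (g⁻¹ * s * g) : k)
              * (((φ (s * g⁻¹ * s⁻¹ * g) (g⁻¹ * s * g) (h⁻¹ * g⁻¹ * s⁻¹ * g * h))⁻¹ : kˣ) : k))
            • single (g * h, s) 1
        else 0 := by
  simp only [hm.sum_single_one_mul hθ₁, hS, hS', hm.single_mul_single, map_smul,
    LinearMap.smul_apply, smul_smul, hθ₁, hθ₂, hγ, one_mul, mul_one, inv_one, inv_inv,
    Units.val_one, mul_ite, ite_mul, zero_mul, mul_zero, ← ite_and]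
  rw [ite_smul, zero_smul]
  -- the deltas produced by the products, solved for the summation indices
  refine ite_congr (propext ⟨?_, ?_⟩) (fun hQ => ?_) fun _ => rfl
  · rintro ⟨⟨hk₂, hst, hh₂, ⟨hk₁, rfl, hc, rfl⟩, rfl⟩, rfl⟩
    refine ⟨?_, rfl, ?_, ?_, ?_, ?_, ?_, rfl, hst⟩
    · rw [hc]; group
    · rw [hk₂]; group
    · rw [hh₂]; group
    · rw [hc]; group
    · rw [hk₁]; group
    · rw [hk₁]; group
  · rintro ⟨rfl, rfl, rfl, rfl, rfl, rfl, rfl, rfl, hst⟩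
    refine ⟨⟨?_, hst, ?_, ⟨?_, rfl, ?_, rfl⟩, ?_⟩, ?_⟩ <;> group
  · obtain ⟨rfl, rfl, rfl, rfl, rfl, rfl, rfl, rfl, -⟩ := hQ
    congr 1
    ring

end TwistedDouble

theorem stmt15_general {G : Type} [Group G] [Fintype G] [DecidableEq G] {k : Type} [Field k]
    (φ : G → G → G → kˣ)
    (hcoc : ∀ a b c d : G,
      φ b c d * φ a (b * c) d * φ a b c = φ a b (c * d) * φ (a * b) c d)
    (hnorm : ∀ a b : G, φ a 1 b = 1)
    (θ : G → G → G → kˣ)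
    (hθ : ∀ s g h : G,
      θ s g h = φ g (g⁻¹ * s * g) h * (φ s g h)⁻¹ * (φ g h (h⁻¹ * g⁻¹ * s * g * h))⁻¹)
    (γ : G → G → G → kˣ)
    (hγ : ∀ g a b : G,
      γ g a b = φ a g (g⁻¹ * b * g) * (φ a b g)⁻¹ * (φ g (g⁻¹ * a * g) (g⁻¹ * b * g))⁻¹)
    (m : ((G × G) →₀ k) →ₗ[k] ((G × G) →₀ k) →ₗ[k] ((G × G) →₀ k))
    (hm : ∀ g s h t : G,
      m (Finsupp.single (g, s) 1) (Finsupp.single (h, t) 1)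
        = if s = g * t * g⁻¹ then (θ s g h : k) • Finsupp.single (g * h, s) (1 : k) else 0)
    (Sl : ((G × G) →₀ k) →ₗ[k] ((G × G) →₀ k))
    (hS : ∀ g s : G,
      Sl (Finsupp.single (g, s) 1)
        = (((θ s⁻¹ g g⁻¹)⁻¹ * (γ g s s⁻¹)⁻¹ : kˣ) : k) • Finsupp.single (g⁻¹, s⁻¹) (1 : k))
    (Sinv : ((G × G) →₀ k) →ₗ[k] ((G × G) →₀ k))
    (hSinvS : ∀ x : (G × G) →₀ k, Sinv (Sl x) = x)
    (g s h t : G) :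
    ∑ g1 : G, ∑ h1 : G, ∑ k1 : G, ∑ g2 : G, ∑ h2 : G, ∑ k2 : G, ∑ a : G, ∑ c : G,
      ((φ g1 h1 k1 : k) * (((φ g2 h2 k2)⁻¹ : kˣ) : k)
          * (if a * c = g2 then (γ 1 a c : k) else 0)) •
        m (m (m (m (m (Finsupp.single ((1 : G), g1) (1 : k))
                  (m (m (Finsupp.single ((1 : G), a) (1 : k)) (Finsupp.single (g, s) 1))
                    (Sl (Finsupp.single ((1 : G), c) 1))))
                (Sl (m (Sinv (m (∑ u : G, Finsupp.single ((1 : G), u) (1 : k))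
                        (Finsupp.single ((1 : G), k1) 1)))
                      (Finsupp.single ((1 : G), h1) 1))))
              (Finsupp.single ((1 : G), h2) 1))
            (Finsupp.single (h, t) 1))
          (Sl (Finsupp.single ((1 : G), k2) 1))
      = if s = g * t * g⁻¹ then
          ((θ s g h : k) * (φ s (g⁻¹ * s⁻¹ * g) (g⁻¹ * s * g) : k)
              * (((φ (s * g⁻¹ * s⁻¹ * g) (g⁻¹ * s * g) (h⁻¹ * g⁻¹ * s⁻¹ * g * h))⁻¹ : kˣ) : k))
            • Finsupp.single (g * h, s) (1 : k)
        else 0 := by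
  have hφ : IsNormalizedCocycle φ := ⟨hcoc, hnorm⟩
  have hθ₁ : ∀ s h, θ s 1 h = 1 := fun s h => (hθ s 1 h).trans (twistTheta_one_left hφ s h)
  have hθ₂ : ∀ s g, θ s g 1 = 1 := fun s g => (hθ s g 1).trans (twistTheta_one_right hφ s g)
  have hγ₁ : ∀ a b, γ 1 a b = 1 := fun a b => (hγ 1 a b).trans (twistGamma_one_left hφ a b)
  have hS₁ := antipode_single_one hS (fun s => hθ₁ s 1) hγ₁
  have hSinv₁ := single_one_of_leftInverse hSinvS hS₁
  simp only [IsTwistedDoubleMul.transmuted_summand_eq_ite hm hθ₁ hθ₂ hγ₁ hS₁ hSinv₁, ite_and,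
    Finset.sum_ite_eq', Finset.mem_univ, if_true]

/-- the transmuted product `m̲(b⊗b′) = q¹(x¹▷b)S(q²)x²b′S(x³)` of the
twisted quantum double `D^φ(G)` (with `q = X¹⊗S⁻¹(αX³)X²` built from the associator
`φ_D = Σ φ(g,h,k)·(e⊗δ_g)⊗(e⊗δ_h)⊗(e⊗δ_k)`, inverse associator
`Σ φ(g,h,k)⁻¹·(e⊗δ_g)⊗(e⊗δ_h)⊗(e⊗δ_k)`, `α = e⊗1`, and `▷` the adjoint action
determined by the coproduct `Δ(g⊗δ_s) = Σ_{ab=s} γ_g(a,b)·(g⊗δ_a)⊗(g⊗δ_b)`) satisfies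
`m̲((g⊗δ_s)⊗(h⊗δ_t)) = δ_{s,gtg⁻¹}·θ_s(g,h)·φ(s,g⁻¹s⁻¹g,g⁻¹sg)·
φ(sg⁻¹s⁻¹g,g⁻¹sg,h⁻¹g⁻¹s⁻¹gh)⁻¹·(gh⊗δ_s)`. -/
theorem stmt15 {G : Type} [Group G] [Fintype G] [DecidableEq G] {k : Type} [Field k]
    (φ : G → G → G → kˣ)
    (hcoc : ∀ a b c d : G,
      φ b c d * φ a (b * c) d * φ a b c = φ a b (c * d) * φ (a * b) c d)
    (hnorm : ∀ a b : G, φ a 1 b = 1)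
    (θ : G → G → G → kˣ)
    (hθ : ∀ s g h : G,
      θ s g h = φ g (g⁻¹ * s * g) h * (φ s g h)⁻¹ * (φ g h (h⁻¹ * g⁻¹ * s * g * h))⁻¹)
    (γ : G → G → G → kˣ)
    (hγ : ∀ g a b : G,
      γ g a b = φ a g (g⁻¹ * b * g) * (φ a b g)⁻¹ * (φ g (g⁻¹ * a * g) (g⁻¹ * b * g))⁻¹)
    (m : ((G × G) →₀ k) →ₗ[k] ((G × G) →₀ k) →ₗ[k] ((G × G) →₀ k))
    (hm : ∀ g s h t : G,
      m (Finsupp.single (g, s) 1) (Finsupp.single (h, t) 1)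
        = if s = g * t * g⁻¹ then (θ s g h : k) • Finsupp.single (g * h, s) (1 : k) else 0)
    (hmassoc : ∀ x y z : (G × G) →₀ k, m (m x y) z = m x (m y z))
    (Sl : ((G × G) →₀ k) →ₗ[k] ((G × G) →₀ k))
    (hS : ∀ g s : G,
      Sl (Finsupp.single (g, s) 1)
        = (((θ s⁻¹ g g⁻¹)⁻¹ * (γ g s s⁻¹)⁻¹ : kˣ) : k) • Finsupp.single (g⁻¹, s⁻¹) (1 : k))
    (Sinv : ((G × G) →₀ k) →ₗ[k] ((G × G) →₀ k))
    (hSSinv : ∀ x : (G × G) →₀ k, Sl (Sinv x) = x)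
    (hSinvS : ∀ x : (G × G) →₀ k, Sinv (Sl x) = x)
    (g s h t : G) :
    ∑ g1 : G, ∑ h1 : G, ∑ k1 : G, ∑ g2 : G, ∑ h2 : G, ∑ k2 : G, ∑ a : G, ∑ c : G,
      ((φ g1 h1 k1 : k) * (((φ g2 h2 k2)⁻¹ : kˣ) : k)
          * (if a * c = g2 then (γ 1 a c : k) else 0)) •
        m (m (m (m (m (Finsupp.single ((1 : G), g1) (1 : k))
                  (m (m (Finsupp.single ((1 : G), a) (1 : k)) (Finsupp.single (g, s) 1))
                    (Sl (Finsupp.single ((1 : G), c) 1))))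
                (Sl (m (Sinv (m (∑ u : G, Finsupp.single ((1 : G), u) (1 : k))
                        (Finsupp.single ((1 : G), k1) 1)))
                      (Finsupp.single ((1 : G), h1) 1))))
              (Finsupp.single ((1 : G), h2) 1))
            (Finsupp.single (h, t) 1))
          (Sl (Finsupp.single ((1 : G), k2) 1))
      = if s = g * t * g⁻¹ then
          ((θ s g h : k) * (φ s (g⁻¹ * s⁻¹ * g) (g⁻¹ * s * g) : k)
              * (((φ (s * g⁻¹ * s⁻¹ * g) (g⁻¹ * s * g) (h⁻¹ * g⁻¹ * s⁻¹ * g * h))⁻¹ : kˣ) : k))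
            • Finsupp.single (g * h, s) (1 : k)
        else 0 :=
  stmt15_general φ hcoc hnorm θ hθ γ hγ m hm Sl hS Sinv hSinvS g s h t
end

section
/- Write the associator of k_φ(G) as φ_G = X¹⊗X²⊗X³ with inverse x¹⊗x²⊗x³, set q = q¹⊗q² = X¹⊗S⁻¹(αX³)X², and let ▷ denote the adjoint action h▷b = h₁bS(h₂) (where Δ(h) = h₁⊗h₂). Then the transmuted product b ·̲ b′ = q¹(x¹▷b)S(q²)x²b′S(x³) of k_φ(G) satisfies, for all s, t ∈ G: δ_s ·̲ δ_t = δ_{s,t}·φ(t,t⁻¹,t)·δ_t. -/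
/-!
In the basis of delta functions all structure maps of `k_φ(G)` are explicit and
`δ_a δ_b = δ_{a,b} δ_a`, so each summand of the transmuted product is a scalar multiple of a
product of delta functions, and it vanishes unless its indices are forced: `x¹ ▷ δ_s = 0`
unless `x¹ = 1`, `S(q²) = 0` unless `X² = (X³)⁻¹`, and the remaining product of deltas forces
`X¹ = X³ = s = t`. The one surviving coefficient is `φ(t, t⁻¹, t) · φ(1, t, t⁻¹)⁻¹`, and a
normalized 3-cocycle is trivial as soon as its first argument is `1`.
-/

theorem Pi.single_one_mul_single_one {ι R : Type*} [DecidableEq ι] [MulZeroOneClass R]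
    (a b : ι) :
    (Pi.single a 1 : ι → R) * Pi.single b 1 = if a = b then Pi.single a 1 else 0 := by
  split_ifs with h
  · rw [h, ← Pi.single_mul, mul_one]
  · ext x
    by_cases hx : x = a
    · subst hx
      simp [Ne.symm h]
    · simp [hx]

theorem cocycle_apply_one_left {G M : Type*} [Monoid G] [Group M] (φ : G → G → G → M)
    (hcoc : ∀ a b c d : G,
      φ b c d * φ a (b * c) d * φ a b c = φ a b (c * d) * φ (a * b) c d)
    (hnorm : ∀ a b : G, φ a 1 b = 1) (a b : G) : φ 1 a b = 1 := by
  have h := hcoc 1 1 a b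
  rwa [hnorm, hnorm, one_mul, one_mul, mul_one, one_mul, mul_eq_right] at h

section

variable {G k : Type*} [Group G] [DecidableEq G] [NonAssocSemiring k]

theorem sum_single_mul_single_mul_single_inv [Fintype G] (r s : G) :
    ∑ a : G, ∑ c : G,
      (if a * c = r then Pi.single a 1 * Pi.single s 1 * (Pi.single c⁻¹ 1 : G → k) else 0)
      = if r = 1 then Pi.single s 1 else 0 := by
  simp only [Pi.single_one_mul_single_one, ite_mul, zero_mul]
  rw [Fintype.sum_eq_single s (fun a ha => by simp [ha]),
    Fintype.sum_eq_single s⁻¹ fun c hc => by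
      simp only [if_neg fun h : s = c⁻¹ => hc (by rw [h, inv_inv]), ite_self]]
  simp [eq_comm]

/-- The conditions are listed innermost summation index first, so that the six sums of the
transmuted product collapse one after the other. -/
theorem transmuted_summand_eq (r1 s1 t1 r2 s2 t2 s t : G) :
    ((Pi.single r1 1 * if r2 = 1 then Pi.single s 1 else 0) *
        (if t1⁻¹ = s1 then Pi.single t1 1 else 0) * Pi.single s2 1 * Pi.single t 1 *
        (Pi.single t2⁻¹ 1 : G → k))
      = if t2 = t⁻¹ ∧ s2 = t ∧ r2 = 1 ∧ t1 = t ∧ s1 = t⁻¹ ∧ r1 = t ∧ s = t then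
          Pi.single t 1 else 0 := by
  simp only [ite_mul, mul_ite, zero_mul, mul_zero, Pi.single_one_mul_single_one]
  split_ifs <;> simp_all [inv_eq_iff_eq_inv]

end

theorem stmt16_general {G : Type} [Group G] [Fintype G] [DecidableEq G] {k : Type} [Field k]
    (φ : G → G → G → kˣ)
    (hcoc : ∀ a b c d : G,
      φ b c d * φ a (b * c) d * φ a b c = φ a b (c * d) * φ (a * b) c d)
    (hnorm : ∀ a b : G, φ a 1 b = 1)
    (dl : G → G → k)
    (hdl : ∀ t x : G, dl t x = if x = t then 1 else 0)
    (Sl : (G → k) →ₗ[k] (G → k))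
    (hSl : ∀ t : G, Sl (dl t) = dl t⁻¹)
    (ad : (G → k) → (G → k) → (G → k))
    (had : ∀ (r : G) (b : G → k),
      ad (dl r) b = ∑ a : G, ∑ c : G, if a * c = r then dl a * b * Sl (dl c) else 0)
    (s t : G) :
    ∑ r1 : G, ∑ s1 : G, ∑ t1 : G, ∑ r2 : G, ∑ s2 : G, ∑ t2 : G,
      ((φ r1 s1 t1 : k) * (((φ r2 s2 t2)⁻¹ : kˣ) : k)) •
        (dl r1 * ad (dl r2) (dl s) * Sl (Sl ((1 : G → k) * dl t1) * dl s1)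
          * dl s2 * dl t * Sl (dl t2))
      = if s = t then (φ t t⁻¹ t : k) • dl t else 0 := by
  obtain rfl : dl = fun t => Pi.single t 1 := by
    ext t x
    rw [hdl, Pi.single_apply]
  simp only [had, hSl, sum_single_mul_single_mul_single_inv]
  simp only [one_mul, Pi.single_one_mul_single_one, apply_ite Sl, map_zero, hSl, inv_inv,
    transmuted_summand_eq, smul_ite, smul_zero, ite_and, Finset.sum_ite_eq', Finset.mem_univ,
    if_true]
  rw [cocycle_apply_one_left φ hcoc hnorm, inv_one, Units.val_one, mul_one]

/-- the transmuted product `b ·̲ b′ = q¹(x¹▷b)S(q²)x²b′S(x³)` of the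
quasi-Hopf algebra `k_φ(G)` of functions on `G` (with pointwise product, associator
`φ_G = Σ φ(r,s,t)·δ_r⊗δ_s⊗δ_t` and inverse `Σ φ(r,s,t)⁻¹·δ_r⊗δ_s⊗δ_t`, antipode
`S(δ_t) = δ_{t⁻¹}` with `S⁻¹ = S`, `α = 1`, and adjoint action `▷` determined by the
coproduct `Δ(δ_t) = Σ_{ab=t} δ_a⊗δ_b`) satisfies `δ_s ·̲ δ_t = δ_{s,t}·φ(t,t⁻¹,t)·δ_t`. -/
theorem stmt16 {G : Type} [Group G] [Fintype G] [DecidableEq G] {k : Type} [Field k]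
    (φ : G → G → G → kˣ)
    (hcoc : ∀ a b c d : G,
      φ b c d * φ a (b * c) d * φ a b c = φ a b (c * d) * φ (a * b) c d)
    (hnorm : ∀ a b : G, φ a 1 b = 1)
    (dl : G → G → k)
    (hdl : ∀ t x : G, dl t x = if x = t then 1 else 0)
    (Sl : (G → k) →ₗ[k] (G → k))
    (hSl : ∀ t : G, Sl (dl t) = dl t⁻¹)
    (hSinv : ∀ x : G → k, Sl (Sl x) = x)
    (ad : (G → k) → (G → k) → (G → k))
    (had : ∀ (r : G) (b : G → k),
      ad (dl r) b = ∑ a : G, ∑ c : G, if a * c = r then dl a * b * Sl (dl c) else 0)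
    (s t : G) :
    ∑ r1 : G, ∑ s1 : G, ∑ t1 : G, ∑ r2 : G, ∑ s2 : G, ∑ t2 : G,
      ((φ r1 s1 t1 : k) * (((φ r2 s2 t2)⁻¹ : kˣ) : k)) •
        (dl r1 * ad (dl r2) (dl s) * Sl (Sl ((1 : G → k) * dl t1) * dl s1)
          * dl s2 * dl t * Sl (dl t2))
      = if s = t then (φ t t⁻¹ t : k) • dl t else 0 :=
  stmt16_general φ hcoc hnorm dl hdl Sl hSl ad had s t
end
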